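/- (Hankel correlation identity.) Let M be a measurable space, κ a Markov kernel from M to M, μ a probability measure invariant for κ, and ν the path measure on ℕ → M of the chain started from μ. Let f : M → ℂ be bounded and measurable, let f_j := K^j f denote the j-step stochastic Koopman iterates, fix k ≥ 1, and suppose A : Matrix (Fin k) (Fin k) ℂ satisfies, for every i < k and μ-almost every x, ∫ f_i d(κ x) = Σ_j A i j · f_j (x). For each s ≥ k − 1 define the k × k matrix M_s with entries (M_s) i j = ∫ f(u(s+i)) · conj(f(u j)) dν(u), for i, j ∈ {0, …, k−1}. Then M_{s+1} = A · M_s for every s ≥ k − 1. -/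

import Mathlib

open MeasureTheory ProbabilityTheory Filter

/-- The shift map on path space: `(shift u) n = u (n+1)`. -/
def shift {M : Type*} (u : ℕ → M) : ℕ → M := fun n => u (n + 1)

/-- `ν` is the law on path space `ℕ → M` of the time-homogeneous Markov chain with
transition kernel `κ` and initial distribution `μ` (the measure produced by the
Ionescu–Tulcea theorem), characterized by its finite-dimensional distributions:
the initial law is `μ`, and the conditional law of `u (n+1)` given `(u 0, …, u n)`
is `κ (u n)`. -/
def IsPathMeasure {M : Type*} [MeasurableSpace M] (κ : Kernel M M) [IsMarkovKernel κ]
    (μ : Measure M) (ν : Measure (ℕ → M)) : Prop :=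
  IsProbabilityMeasure ν ∧
  ν.map (fun u => u 0) = μ ∧
  ∀ n : ℕ,
    ν.map (fun u => ((fun i : Fin (n + 1) => u i), u (n + 1)))
      = (ν.map (fun u => fun i : Fin (n + 1) => u i)) ⊗ₘ
        (κ.comap (fun v : Fin (n + 1) → M => v (Fin.last n)) (measurable_pi_apply _))

/-- The `s`-fold composition of the kernel `κ` with itself; integration against it
gives the `s`-step stochastic Koopman operator. -/
noncomputable def kpow {M : Type*} [MeasurableSpace M] (κ : Kernel M M) : ℕ → Kernel M M
  | 0 => Kernel.id
  | n + 1 => κ ∘ₖ kpow κ n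

/-!
By the Markov property, in a correlation of `g (u (s + d))` with a function of the path up to
time `s`, the factor `g (u (s + d))` may be replaced by `(K^d g) (u s)`. Hence
`(M_{s+1}) i j = ∫ (K^(i+1) f) (u s) * conj (f (u j)) dν` as soon as `j ≤ s`. Since `u s` has law
`μ` by invariance, the relation `K f_i = ∑ l, A i l * f_l`, which holds only `μ`-almost
everywhere, can be substituted under the integral, giving `∑ l, A i l * (M_s) l j`.
-/

section KernelIntegrals

variable {α β γ E : Type*} [MeasurableSpace α] [MeasurableSpace β] [MeasurableSpace γ]
  [NormedAddCommGroup E] [NormedSpace ℝ E]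

lemma norm_integral_le_of_forall_norm_le {ρ : Measure α} [IsProbabilityMeasure ρ] {g : α → E}
    {C : ℝ} (hC : ∀ x, ‖g x‖ ≤ C) : ‖∫ x, g x ∂ρ‖ ≤ C := by
  simpa using norm_integral_le_of_norm_le_const (μ := ρ) (ae_of_all _ hC)

lemma integral_comp_of_forall_norm_le {η : Kernel β γ} {ξ : Kernel α β} [IsMarkovKernel η]
    [IsMarkovKernel ξ] {g : γ → E} (hg : StronglyMeasurable g) {C : ℝ} (hC : ∀ z, ‖g z‖ ≤ C)
    (a : α) : ∫ z, g z ∂(η ∘ₖ ξ) a = ∫ y, ∫ z, g z ∂η y ∂ξ a :=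
  Kernel.integral_comp (Integrable.of_bound hg.aestronglyMeasurable C (ae_of_all _ hC))

lemma Measure.comp_comap {ρ : Measure α} {κ : Kernel β γ} {f : α → β} (hf : Measurable f) :
    κ.comap f hf ∘ₘ ρ = κ ∘ₘ ρ.map f := by
  rw [← Kernel.comp_deterministic_eq_comap, ← Measure.comp_assoc,
    Measure.deterministic_comp_eq_map]

end KernelIntegrals

section KoopmanIterates

variable {M E : Type*} [MeasurableSpace M] [NormedAddCommGroup E] [NormedSpace ℝ E]
  (κ : Kernel M M)

instance isMarkovKernel_kpow [IsMarkovKernel κ] (n : ℕ) : IsMarkovKernel (kpow κ n) := by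
  induction n with
  | zero => rw [kpow]; infer_instance
  | succ n ih => rw [kpow]; infer_instance

lemma kpow_succ' (n : ℕ) : kpow κ (n + 1) = kpow κ n ∘ₖ κ := by
  induction n with
  | zero => exact (Kernel.comp_id κ).trans (Kernel.id_comp κ).symm
  | succ n ih =>
    change κ ∘ₖ kpow κ (n + 1) = (κ ∘ₖ kpow κ n) ∘ₖ κ
    rw [ih, Kernel.comp_assoc]

lemma integral_kpow_succ [IsMarkovKernel κ] {g : M → E} (hg : StronglyMeasurable g) {C : ℝ}
    (hC : ∀ x, ‖g x‖ ≤ C) (n : ℕ) (x : M) :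
    ∫ y, g y ∂kpow κ (n + 1) x = ∫ y, ∫ z, g z ∂kpow κ n y ∂κ x := by
  rw [kpow_succ']
  exact integral_comp_of_forall_norm_le hg hC x

end KoopmanIterates

namespace IsPathMeasure

variable {M 𝕜 : Type*} [MeasurableSpace M] [RCLike 𝕜] {κ : Kernel M M} [IsMarkovKernel κ]
  {μ : Measure M} {ν : Measure (ℕ → M)}

lemma map_eval (hν : IsPathMeasure κ μ ν) (hinv : μ.bind (fun x => κ x) = μ) (n : ℕ) :
    ν.map (fun u => u n) = μ := by
  have := hν.1
  induction n with
  | zero => exact hν.2.1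
  | succ n ih =>
    calc ν.map (fun u => u (n + 1))
        = (ν.map fun u => ((fun i : Fin (n + 1) => u i), u (n + 1))).snd := by
          rw [Measure.snd, Measure.map_map measurable_snd (by fun_prop)]
          rfl
      _ = κ ∘ₘ (ν.map fun u => fun i : Fin (n + 1) => u i).map fun v => v (Fin.last n) := by
          rw [hν.2.2 n, Measure.snd_compProd, Measure.comp_comap]
      _ = μ := by
          rw [Measure.map_map (measurable_pi_apply _) (by fun_prop)]
          exact ih ▸ hinv

lemma integral_eval_succ_mul (hν : IsPathMeasure κ μ ν) (n : ℕ) {g : M → 𝕜} (hg : Measurable g)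
    {C : ℝ} (hgC : ∀ x, ‖g x‖ ≤ C) {φ : (Fin (n + 1) → M) → 𝕜} (hφ : Measurable φ) {D : ℝ}
    (hφD : ∀ v, ‖φ v‖ ≤ D) :
    ∫ u, g (u (n + 1)) * φ (fun i => u i) ∂ν
      = ∫ u, (∫ y, g y ∂κ (u n)) * φ (fun i => u i) ∂ν := by
  have := hν.1
  have hπ : Measurable fun u : ℕ → M => fun i : Fin (n + 1) => u i := by fun_prop
  have hint : Integrable (fun p : (Fin (n + 1) → M) × M => g p.2 * φ p.1)
      ((ν.map fun u => fun i : Fin (n + 1) => u i) ⊗ₘ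
        κ.comap (fun v : Fin (n + 1) → M => v (Fin.last n)) (measurable_pi_apply _)) :=
    .of_bound (by fun_prop) (C * D) (ae_of_all _ fun p => norm_mul_le_of_le (hgC _) (hφD _))
  calc ∫ u, g (u (n + 1)) * φ (fun i => u i) ∂ν
      = ∫ p, g p.2 * φ p.1 ∂(ν.map fun u => ((fun i : Fin (n + 1) => u i), u (n + 1))) :=
        (integral_map (hπ.prodMk (measurable_pi_apply _)).aemeasurable
          ((hg.comp measurable_snd).mul (hφ.comp measurable_fst)).aestronglyMeasurable).symm
    _ = ∫ v, ∫ y, g y * φ v ∂κ (v (Fin.last n))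
          ∂(ν.map fun u => fun i : Fin (n + 1) => u i) := by
        rw [hν.2.2 n, Measure.integral_compProd hint]
        rfl
    _ = ∫ v, (∫ y, g y ∂κ (v (Fin.last n))) * φ v
          ∂(ν.map fun u => fun i : Fin (n + 1) => u i) := by
        simp_rw [integral_mul_const]
    _ = ∫ u, (∫ y, g y ∂κ (u n)) * φ (fun i => u i) ∂ν :=
        integral_map hπ.aemeasurable
          ((hg.stronglyMeasurable.integral_kernel.measurable.comp (measurable_pi_apply _)).mul
            hφ).aestronglyMeasurable

lemma integral_eval_add_mul (hν : IsPathMeasure κ μ ν) (n d : ℕ) {g : M → 𝕜} (hg : Measurable g)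
    {C : ℝ} (hgC : ∀ x, ‖g x‖ ≤ C) {φ : (Fin (n + 1) → M) → 𝕜} (hφ : Measurable φ) {D : ℝ}
    (hφD : ∀ v, ‖φ v‖ ≤ D) :
    ∫ u, g (u (n + d)) * φ (fun i => u i) ∂ν
      = ∫ u, (∫ y, g y ∂kpow κ d (u n)) * φ (fun i => u i) ∂ν := by
  induction d generalizing g C with
  | zero =>
    simp only [Nat.add_zero, kpow, Kernel.id_apply, integral_dirac' _ _ hg.stronglyMeasurable]
  | succ d ih =>
    have hφ' : Measurable fun v : Fin (n + d + 1) → M =>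
        φ fun i => v (Fin.castLE (by omega) i) := hφ.comp (by fun_prop)
    calc ∫ u, g (u (n + (d + 1))) * φ (fun i => u i) ∂ν
        = ∫ u, (∫ y, g y ∂κ (u (n + d))) * φ (fun i => u i) ∂ν :=
          hν.integral_eval_succ_mul (n + d) hg hgC hφ' (fun _ => hφD _)
      _ = ∫ u, (∫ x, ∫ y, g y ∂κ x ∂kpow κ d (u n)) * φ (fun i => u i) ∂ν :=
          ih hg.stronglyMeasurable.integral_kernel.measurable
            (fun _ => norm_integral_le_of_forall_norm_le hgC)
      _ = ∫ u, (∫ y, g y ∂kpow κ (d + 1) (u n)) * φ (fun i => u i) ∂ν := by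
          simp only [kpow, integral_comp_of_forall_norm_le hg.stronglyMeasurable hgC]

lemma integral_eval_add_mul_eval (hν : IsPathMeasure κ μ ν) {m n : ℕ} (hmn : m ≤ n) (d : ℕ)
    {g : M → 𝕜} (hg : Measurable g) {C : ℝ} (hgC : ∀ x, ‖g x‖ ≤ C) {h : M → 𝕜}
    (hh : Measurable h) {D : ℝ} (hhD : ∀ x, ‖h x‖ ≤ D) :
    ∫ u, g (u (n + d)) * h (u m) ∂ν = ∫ u, (∫ y, g y ∂kpow κ d (u n)) * h (u m) ∂ν :=
  hν.integral_eval_add_mul n d hg hgC (φ := fun v => h (v ⟨m, by omega⟩))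
    (hh.comp (measurable_pi_apply _)) (fun _ => hhD _)

end IsPathMeasure

theorem stmt14_general {M : Type*} [MeasurableSpace M] (κ : Kernel M M) [IsMarkovKernel κ]
    (μ : Measure M)
    (hinv : μ.bind (fun x => κ x) = μ)
    (ν : Measure (ℕ → M)) (hν : IsPathMeasure κ μ ν)
    (f : M → ℂ) (hmeas : Measurable f) (hbdd : ∃ C : ℝ, ∀ x, ‖f x‖ ≤ C)
    (fiter : ℕ → M → ℂ) (hfiter : fiter = fun j x => ∫ y, f y ∂(kpow κ j x))
    (k : ℕ)
    (A : Matrix (Fin k) (Fin k) ℂ)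
    (hA : ∀ i : Fin k, ∀ᵐ x ∂μ,
      ∫ y, fiter (i : ℕ) y ∂(κ x) = ∑ j, A i j * fiter (j : ℕ) x)
    (Mmat : ℕ → Matrix (Fin k) (Fin k) ℂ)
    (hMmat : Mmat = fun s => Matrix.of fun i j : Fin k =>
      ∫ u, f (u (s + (i : ℕ))) * (starRingEnd ℂ) (f (u (j : ℕ))) ∂ν) :
    ∀ s : ℕ, k - 1 ≤ s → Mmat (s + 1) = A * Mmat s := by
  obtain ⟨C, hC⟩ := hbdd
  subst hfiter hMmat
  intro s hs
  have := hν.1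
  have hF (l : ℕ) : Measurable fun x => ∫ y, f y ∂kpow κ l x :=
    hmeas.stronglyMeasurable.integral_kernel.measurable
  have hconj : Measurable fun x => starRingEnd ℂ (f x) :=
    Complex.continuous_conj.measurable.comp hmeas
  have hconjC : ∀ x, ‖starRingEnd ℂ (f x)‖ ≤ C := by simpa using hC
  have hcorr (d : ℕ) (j : Fin k) : ∫ u, f (u (s + d)) * starRingEnd ℂ (f (u j)) ∂ν
      = ∫ u, (∫ y, f y ∂kpow κ d (u s)) * starRingEnd ℂ (f (u j)) ∂ν :=
    hν.integral_eval_add_mul_eval (by omega) d hmeas hC hconj hconjC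
  have hkoopman (i : Fin k) : ∀ᵐ u ∂ν,
      ∫ y, f y ∂kpow κ (i + 1) (u s) = ∑ l, A i l * ∫ y, f y ∂kpow κ l (u s) := by
    have hAi := hA i
    rw [← hν.map_eval hinv s] at hAi
    filter_upwards [ae_of_ae_map (measurable_pi_apply s).aemeasurable hAi] with u hu
    rw [integral_kpow_succ κ hmeas.stronglyMeasurable hC, hu]
  have hint (l : Fin k) (j : Fin k) :
      Integrable (fun u => (∫ y, f y ∂kpow κ l (u s)) * starRingEnd ℂ (f (u j))) ν :=
    .of_bound (((hF l).comp (measurable_pi_apply s)).mul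
        (hconj.comp (measurable_pi_apply _))).aestronglyMeasurable (C * C)
      (ae_of_all _ fun _ => norm_mul_le_of_le (norm_integral_le_of_forall_norm_le hC) (hconjC _))
  ext i j
  simp only [Matrix.mul_apply, Matrix.of_apply]
  rw [show s + 1 + (i : ℕ) = s + (i + 1) by omega, hcorr]
  simp_rw [hcorr, ← integral_const_mul]
  rw [← integral_finsetSum _ (fun l _ => (hint l j).const_mul (A i l))]
  refine integral_congr_ae ?_
  filter_upwards [hkoopman i] with u hu
  simp [hu, Finset.sum_mul, mul_assoc]

/-- Hankel correlation identity: the exact (infinite-data) Hankel Gram matrices of the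
time-delayed observable satisfy `M_{s+1} = A * M_s` for `s ≥ k - 1`, where `A` is the
matrix of the stochastic Koopman operator on the Krylov span of `f`. -/
theorem stmt14 {M : Type*} [MeasurableSpace M] (κ : Kernel M M) [IsMarkovKernel κ]
    (μ : Measure M) [IsProbabilityMeasure μ]
    (hinv : μ.bind (fun x => κ x) = μ)
    (ν : Measure (ℕ → M)) (hν : IsPathMeasure κ μ ν)
    (f : M → ℂ) (hmeas : Measurable f) (hbdd : ∃ C : ℝ, ∀ x, ‖f x‖ ≤ C)
    (fiter : ℕ → M → ℂ) (hfiter : fiter = fun j x => ∫ y, f y ∂(kpow κ j x))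
    (k : ℕ) (hk : 1 ≤ k)
    (A : Matrix (Fin k) (Fin k) ℂ)
    (hA : ∀ i : Fin k, ∀ᵐ x ∂μ,
      ∫ y, fiter (i : ℕ) y ∂(κ x) = ∑ j, A i j * fiter (j : ℕ) x)
    (Mmat : ℕ → Matrix (Fin k) (Fin k) ℂ)
    (hMmat : Mmat = fun s => Matrix.of fun i j : Fin k =>
      ∫ u, f (u (s + (i : ℕ))) * (starRingEnd ℂ) (f (u (j : ℕ))) ∂ν) :
    ∀ s : ℕ, k - 1 ≤ s → Mmat (s + 1) = A * Mmat s :=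
  stmt14_general κ μ hinv ν hν f hmeas hbdd fiter hfiter k A hA Mmat hMmat
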